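/- Let n be a positive integer divisible by 4. For a member L of the family F_n (whose points are indexed by list positions 1, …, n), define the index form of its combinatorial onion layer decomposition as the sequence (I_1, …, I_k) of subsets of {1, …, n}, where I_j is the set of list indices of the points in the j-th layer. Then the number of distinct sequences (I_1, …, I_k) arising as the index form of the combinatorial onion layer decomposition of some member of F_n is at least (n/4)!. In particular, although every member of F_n has the same x-sorted index permutation and the same y-sorted index permutation, the family admits at least (n/4)! distinct combinatorial onion layer decompositions. -/

import Mathlib

/-- The extreme points (vertices) of the convex hull of `Q`: the points `q ∈ Q` that do
not lie in the convex hull of `Q \ {q}`. -/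
def hullVertices (Q : Set (ℝ × ℝ)) : Set (ℝ × ℝ) :=
  {q ∈ Q | q ∉ convexHull ℝ (Q \ {q})}

/-- `L = (S_1, …, S_k)` is a combinatorial onion layer decomposition of `P`. -/
def IsOnionDecomp (P : Set (ℝ × ℝ)) (L : List (Set (ℝ × ℝ))) : Prop :=
  L ≠ [] ∧
  (∀ S ∈ L, S.Nonempty) ∧
  List.Pairwise Disjoint L ∧
  (⋃₀ {S | S ∈ L}) = P ∧
  ∀ i < L.length,
    L.getD i ∅ = hullVertices (P \ ⋃ j ∈ Finset.range i, L.getD j ∅)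

/-- Membership in the family `F_n` (with `n = 4*m`). -/
def InFamilyF (n m : ℕ) (p1 p2 p3 q : Fin m → ℝ × ℝ) : Prop :=
  (∀ i, p1 i ∈ openSegment ℝ
      (((-2 : ℝ), (-2 * (n : ℝ) - 6)))
      (((0 : ℝ), (-2 * (n : ℝ) - 4)))) ∧
  StrictMono (fun i => (p1 i).1) ∧
  (∀ i, p2 i ∈ openSegment ℝ (((0 : ℝ), (0 : ℝ))) (((2 : ℝ), (-2 : ℝ)))) ∧
  StrictMono (fun i => (p2 i).1) ∧
  (∀ i, p3 i ∈ openSegment ℝ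
      ((2 * (n : ℝ) + 2, -2 * (n : ℝ) - 2))
      ((2 * (n : ℝ) + 4, -2 * (n : ℝ) - 4))) ∧
  StrictMono (fun i => (p3 i).1) ∧
  (∀ i : Fin m, q i ∈ openSegment ℝ
      ((2 * ((i : ℕ) + 1 : ℝ) + 1, -(2 * ((i : ℕ) + 1 : ℝ)) - 1))
      ((2 * ((i : ℕ) + 1 : ℝ) + 2, -(2 * ((i : ℕ) + 1 : ℝ)))))

/-- The list of all `n = 4m` points of a member of `F_n`, in list order `P₁, P₂, P₃, Q`. -/
def familyFList (m : ℕ) (p1 p2 p3 q : Fin m → ℝ × ℝ) : List (ℝ × ℝ) :=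
  List.ofFn p1 ++ List.ofFn p2 ++ List.ofFn p3 ++ List.ofFn q

/-- The index form of an onion layer decomposition `L` of (the point set of) a point
list: each layer is replaced by the set of list positions of its points. -/
def indexForm (m : ℕ) (p1 p2 p3 q : Fin m → ℝ × ℝ) (L : List (Set (ℝ × ℝ))) :
    List (Set ℕ) :=
  L.map (fun S =>
    {idx : ℕ | idx < 4 * m ∧ (familyFList m p1 p2 p3 q).getD idx ((0 : ℝ), (0 : ℝ)) ∈ S})

/-!
Write `m = n / 4`. For each permutation `σ` of `Fin m` we place the points so that the `j`-th
onion layer is `{a_j, b_j, c_{m-1-j}, q_{σ⁻¹ j}}`. The points `b_k` (near the origin) and `c_k`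
(far to the right) lie on the line `x + y = 0`, the points `a_k` on a parallel line far below it,
and `q_k` is lifted above the line `x + y = 0` by `ε ^ (σ k + 1)`, where
`ε = ratio m = 1 / (2m + 4)`.
Among the points not yet peeled off before layer `j`, the four points of layer `j` are strictly
exposed, by the functionals `-(x + y)`, `y`, `x` and `x + y`. Every other point lies in their
convex hull: on the segment `[b_j, c_{m-1-j}]`, or in a triangle over that segment with apex
`a_j` or `q_{σ⁻¹ j}`. For the `q` points this works because the lifts decay geometrically, so
each lower `q` point lies inside the triangle whose apex is the highest one. The last block of
the index form records `σ⁻¹`, so different permutations give different index forms.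
-/

open Set Function

theorem notMem_convexHull_of_forall_lt {𝕜 E : Type*} [Field 𝕜] [LinearOrder 𝕜]
    [IsStrictOrderedRing 𝕜] [AddCommGroup E] [Module 𝕜 E] {S : Set E} {v : E}
    (f : E →ₗ[𝕜] 𝕜) (h : ∀ p ∈ S, f p < f v) : v ∉ convexHull 𝕜 S := fun hv =>
  lt_irrefl _ (convexHull_min h (convex_halfSpace_lt f.isLinear (f v)) hv)

theorem mem_openSegment_of_combo {E : Type*} [AddCommGroup E] [Module ℝ E] {x y p : E} {t : ℝ}
    (ht₀ : 0 < t) (ht₁ : t < 1) (hp : (1 - t) • x + t • y = p) : p ∈ openSegment ℝ x y :=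
  ⟨1 - t, t, by linarith, ht₀, by ring, hp⟩

theorem mem_segment_of_mem_line {u v p : ℝ × ℝ} {s c : ℝ} (hu : u.2 = s * u.1 + c)
    (hv : v.2 = s * v.1 + c) (hp : p.2 = s * p.1 + c) (hup : u.1 ≤ p.1) (hpv : p.1 ≤ v.1) :
    p ∈ segment ℝ u v := by
  let g : ℝ →ᵃ[ℝ] ℝ × ℝ := AffineMap.lineMap (0, c) (1, s + c)
  have hg : ∀ z : ℝ × ℝ, z.2 = s * z.1 + c → g z.1 = z := fun z hz => by
    ext <;> simp [g, AffineMap.lineMap_apply, hz]; ring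
  rw [← hg u hu, ← hg v hv, ← hg p hp, ← image_segment, segment_eq_Icc (hup.trans hpv)]
  exact mem_image_of_mem g ⟨hup, hpv⟩

theorem mem_convexHull_of_mem_segment_of_mem_segment {E : Type*} [AddCommGroup E]
    [Module ℝ E] {S : Set E} {u v w z p : E} (hu : u ∈ S) (hv : v ∈ S) (hw : w ∈ S)
    (hz : z ∈ segment ℝ v w) (hp : p ∈ segment ℝ u z) : p ∈ convexHull ℝ S :=
  (convex_convexHull ℝ S).segment_subset (subset_convexHull ℝ S hu)
    (segment_subset_convexHull hv hw hz) hp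

theorem hullVertices_image_eq {ι : Type*} {pt : ι → ℝ × ℝ} (hpt : Injective pt)
    {A B : Set ι} (hBA : B ⊆ A)
    (hexposed : ∀ i ∈ B, ∃ f : ℝ × ℝ →ₗ[ℝ] ℝ, ∀ i' ∈ A, i' ≠ i → f (pt i') < f (pt i))
    (hinner : ∀ i ∈ A, i ∉ B → pt i ∈ convexHull ℝ (pt '' B)) :
    hullVertices (pt '' A) = pt '' B := by
  have hrem : ∀ i, pt '' A \ {pt i} = pt '' (A \ {i}) := fun i => by
    rw [image_sdiff hpt, image_singleton]
  ext p
  constructor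
  · rintro ⟨⟨i, hiA, rfl⟩, hi⟩
    by_contra hiB
    have hB : B ⊆ A \ {i} := fun i' hi' =>
      ⟨hBA hi', fun h => hiB (mem_image_of_mem pt ((mem_singleton_iff.1 h) ▸ hi'))⟩
    exact hi (hrem i ▸ convexHull_mono (image_mono hB)
      (hinner i hiA fun h => hiB (mem_image_of_mem pt h)))
  · rintro ⟨i, hiB, rfl⟩
    obtain ⟨f, hf⟩ := hexposed i hiB
    refine ⟨mem_image_of_mem pt (hBA hiB), hrem i ▸ notMem_convexHull_of_forall_lt f ?_⟩
    rintro _ ⟨i', ⟨hi'A, hi'⟩, rfl⟩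
    exact hf i' hi'A hi'

theorem isOnionDecomp_ofFn {ι : Type*} {m : ℕ} (hm : 0 < m) {pt : ι → ℝ × ℝ}
    (hpt : Injective pt) {level : ι → Fin m} (hlevel : Surjective level)
    (hpeel : ∀ j, hullVertices (pt '' {i | j ≤ level i}) = pt '' {i | level i = j}) :
    IsOnionDecomp (range pt) (List.ofFn fun j => pt '' {i | level i = j}) := by
  set L := List.ofFn fun j => pt '' {i | level i = j}
  have hgetD : ∀ j (hj : j < m), L.getD j ∅ = pt '' {i | level i = ⟨j, hj⟩} := fun j hj => by
    rw [List.getD_eq_getElem _ _ (by simpa [L] using hj), List.getElem_ofFn]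
  have hpeeled : ∀ j < m, ⋃ j' ∈ Finset.range j, L.getD j' ∅ = pt '' {i | level i < j} := by
    intro j hj
    ext p
    simp only [mem_iUnion, Finset.mem_range, exists_prop]
    constructor
    · rintro ⟨j', hj', hp⟩
      obtain ⟨i, hi, rfl⟩ := hgetD j' (hj'.trans hj) ▸ hp
      exact ⟨i, by simp_all, rfl⟩
    · rintro ⟨i, hi, rfl⟩
      exact ⟨level i, hi, hgetD _ (level i).isLt ▸ ⟨i, rfl, rfl⟩⟩
  refine ⟨by simp [L, hm.ne'], ?_, ?_, by ext; simp [L], fun j hj => ?_⟩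
  · simp only [L, List.mem_ofFn, forall_exists_index]
    rintro _ j rfl
    obtain ⟨i, rfl⟩ := hlevel j
    exact ⟨pt i, i, rfl, rfl⟩
  · refine List.pairwise_ofFn.2 fun j j' hjj' => (disjoint_image_iff hpt).2 ?_
    exact disjoint_left.2 fun i hi hi' => hjj'.ne (hi.symm.trans hi')
  · rw [List.length_ofFn] at hj
    rw [hgetD j hj, hpeeled j hj, ← image_univ, ← image_sdiff hpt, ← hpeel]
    congr 2
    ext i
    simp [Fin.le_def]

theorem setOf_getD_mem_image_eq {α ι : Type*} {l : List α} {d : α} {N : ℕ} {f : ι → α}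
    (hf : Injective f) {pos : ι → ℕ} (hpos : ∀ i, pos i < N)
    (hsurj : ∀ n < N, ∃ i, pos i = n) (hget : ∀ i, l.getD (pos i) d = f i) (A : Set ι) :
    {n | n < N ∧ l.getD n d ∈ f '' A} = pos '' A := by
  ext n
  constructor
  · rintro ⟨hn, hmem⟩
    obtain ⟨i, rfl⟩ := hsurj n hn
    rw [hget, hf.mem_set_image] at hmem
    exact ⟨i, hmem, rfl⟩
  · rintro ⟨i, hi, rfl⟩
    exact ⟨hpos i, hget i ▸ mem_image_of_mem f hi⟩

namespace FamilyF

variable {m : ℕ}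

noncomputable def param (m : ℕ) (k : Fin m) : ℝ := (k + 1) / (m + 1)

noncomputable def ratio (m : ℕ) : ℝ := 1 / (2 * m + 4)

noncomputable def lift (m : ℕ) (l : Fin m) : ℝ := ratio m ^ ((l : ℕ) + 1)

noncomputable def ptA (m : ℕ) (k : Fin m) : ℝ × ℝ :=
  (-2 + 2 * param m k, -8 * m - 6 + 2 * param m k)

noncomputable def ptB (m : ℕ) (k : Fin m) : ℝ × ℝ := (2 * param m k, -(2 * param m k))

noncomputable def ptC (m : ℕ) (k : Fin m) : ℝ × ℝ :=
  (8 * m + 2 + 2 * param m k, -(8 * m + 2 + 2 * param m k))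

noncomputable def ptQ (σ : Equiv.Perm (Fin m)) (k : Fin m) : ℝ × ℝ :=
  (2 * ((k : ℕ) + 1 : ℝ) + 1 + lift m (σ k), -(2 * ((k : ℕ) + 1 : ℝ)) - 1 + lift m (σ k))

lemma param_pos (k : Fin m) : 0 < param m k := by unfold param; positivity

lemma param_lt_one (k : Fin m) : param m k < 1 := by
  rw [param, div_lt_one (by positivity)]
  exact_mod_cast Nat.succ_lt_succ k.isLt

lemma param_strictMono : StrictMono (param m) := fun k k' h => by
  unfold param
  gcongr
  exact_mod_cast h

lemma ratio_pos : 0 < ratio m := by unfold ratio; positivity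

lemma ratio_lt_one : ratio m < 1 := by
  rw [ratio, div_lt_one (by positivity)]; linarith [(m.cast_nonneg : (0 : ℝ) ≤ m)]

lemma ratio_mul : ratio m * (2 * m + 4) = 1 := by unfold ratio; field_simp

lemma lift_pos (l : Fin m) : 0 < lift m l := pow_pos ratio_pos _

lemma lift_le_ratio (l : Fin m) : lift m l ≤ ratio m := by
  simpa [lift] using pow_le_pow_of_le_one ratio_pos.le ratio_lt_one.le (Nat.le_add_left 1 l)

lemma lift_lt_one (l : Fin m) : lift m l < 1 := (lift_le_ratio l).trans_lt ratio_lt_one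

lemma lift_le_ratio_mul {l l' : Fin m} (h : l < l') : lift m l' ≤ ratio m * lift m l := by
  rw [lift, lift, ← pow_succ']
  exact pow_le_pow_of_le_one ratio_pos.le ratio_lt_one.le (by simpa using h)

lemma lift_strictAnti : StrictAnti (lift m) := fun l l' h => by
  nlinarith [lift_le_ratio_mul h, lift_pos l, ratio_lt_one (m := m)]

lemma ptA_fst_strictMono : StrictMono fun k => (ptA m k).1 := fun k k' h => by
  simpa [ptA] using param_strictMono h

lemma ptB_fst_strictMono : StrictMono fun k => (ptB m k).1 := fun k k' h => by
  simpa [ptB] using param_strictMono h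

lemma ptC_fst_strictMono : StrictMono fun k => (ptC m k).1 := fun k k' h => by
  simpa [ptC] using param_strictMono h

lemma ptQ_fst_strictMono (σ : Equiv.Perm (Fin m)) : StrictMono fun k => (ptQ σ k).1 :=
  fun k k' h => by
    have : (k : ℝ) + 1 ≤ k' := by exact_mod_cast h
    simp only [ptQ]
    linarith [lift_lt_one (σ k), lift_pos (σ k')]

lemma ptA_fst_neg (k : Fin m) : (ptA m k).1 < 0 := by
  simp only [ptA]; linarith [param_lt_one k]

lemma ptB_fst_pos (k : Fin m) : 0 < (ptB m k).1 := by
  simp only [ptB]; linarith [param_pos k]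

lemma ptB_fst_lt_two (k : Fin m) : (ptB m k).1 < 2 := by
  simp only [ptB]; linarith [param_lt_one k]

lemma three_lt_ptQ_fst (σ : Equiv.Perm (Fin m)) (k : Fin m) : 3 < (ptQ σ k).1 := by
  simp only [ptQ]; linarith [lift_pos (σ k), (k : ℕ).cast_nonneg (α := ℝ)]

lemma ptQ_fst_lt (σ : Equiv.Perm (Fin m)) (k : Fin m) : (ptQ σ k).1 < 2 * m + 3 := by
  have : (k : ℝ) + 1 ≤ m := by exact_mod_cast k.isLt
  simp only [ptQ]; linarith [lift_lt_one (σ k)]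

lemma lt_ptC_fst (k : Fin m) : 8 * m + 2 < (ptC m k).1 := by
  simp only [ptC]; linarith [param_pos k]

lemma ptC_fst_lt (k : Fin m) : (ptC m k).1 < 8 * m + 4 := by
  simp only [ptC]; linarith [param_lt_one k]

theorem inFamilyF {n : ℕ} (hn : n = 4 * m) (σ : Equiv.Perm (Fin m)) :
    InFamilyF n m (ptA m) (ptB m) (ptC m) (ptQ σ) := by
  subst hn
  refine ⟨fun k => ?_, fun k k' h => ?_, fun k => ?_, fun k k' h => ?_, fun k => ?_,
    fun k k' h => ?_, fun k => ?_⟩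
  · exact mem_openSegment_of_combo (param_pos k) (param_lt_one k)
      (by ext <;> simp [ptA] <;> ring)
  · exact ptA_fst_strictMono h
  · exact mem_openSegment_of_combo (param_pos k) (param_lt_one k)
      (by ext <;> simp [ptB] <;> ring)
  · exact ptB_fst_strictMono h
  · exact mem_openSegment_of_combo (param_pos k) (param_lt_one k)
      (by ext <;> simp [ptC] <;> ring)
  · exact ptC_fst_strictMono h
  · exact mem_openSegment_of_combo (lift_pos (σ k)) (lift_lt_one (σ k))
      (by ext <;> simp [ptQ] <;> ring)

abbrev PointIndex (m : ℕ) := ((Fin m ⊕ Fin m) ⊕ Fin m) ⊕ Fin m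

noncomputable def pt (σ : Equiv.Perm (Fin m)) : PointIndex m → ℝ × ℝ :=
  Sum.elim (Sum.elim (Sum.elim (ptA m) (ptB m)) (ptC m)) (ptQ σ)

/-- The onion layer containing `pt σ i`, counted from the outside starting at `0`. -/
def level (σ : Equiv.Perm (Fin m)) : PointIndex m → Fin m :=
  Sum.elim (Sum.elim (Sum.elim id id) Fin.rev) σ

def pos : PointIndex m → ℕ :=
  Sum.elim (Sum.elim (Sum.elim (fun k => k) (fun k => m + k)) (fun k => 2 * m + k))
    (fun k => 3 * m + k)

def layers (σ : Equiv.Perm (Fin m)) : List (Set (ℝ × ℝ)) :=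
  List.ofFn fun j => pt σ '' {i | level σ i = j}

lemma pt_injective (σ : Equiv.Perm (Fin m)) : Injective (pt σ) := by
  rintro (((k | k) | k) | k) (((k' | k') | k') | k') h <;>
    have hx := congrArg Prod.fst h <;>
    simp only [pt, Sum.elim_inl, Sum.elim_inr, Sum.inl.injEq, Sum.inr.injEq,
      reduceCtorEq] at hx ⊢
  all_goals first
    | exact ptA_fst_strictMono.injective hx
    | exact ptB_fst_strictMono.injective hx
    | exact ptC_fst_strictMono.injective hx
    | exact (ptQ_fst_strictMono σ).injective hx
    | linarith [ptA_fst_neg k, ptA_fst_neg k', ptB_fst_pos k, ptB_fst_pos k', ptB_fst_lt_two k,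
        ptB_fst_lt_two k', three_lt_ptQ_fst σ k, three_lt_ptQ_fst σ k', ptQ_fst_lt σ k,
        ptQ_fst_lt σ k', lt_ptC_fst k, lt_ptC_fst k', (show (1 : ℝ) ≤ m by exact_mod_cast k.pos)]

lemma exists_forall_lt_of_level_le (σ : Equiv.Perm (Fin m)) (i : PointIndex m) :
    ∃ f : ℝ × ℝ →ₗ[ℝ] ℝ, ∀ i', level σ i ≤ level σ i' → i' ≠ i → f (pt σ i') < f (pt σ i) := by
  have hcast : ∀ k : Fin m, (0 : ℝ) ≤ k ∧ (k : ℝ) + 1 ≤ m := fun k =>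
    ⟨k.val.cast_nonneg, by exact_mod_cast k.isLt⟩
  rcases i with ((j | j) | j) | j
  · refine ⟨-(LinearMap.fst ℝ ℝ ℝ + LinearMap.snd ℝ ℝ ℝ), ?_⟩
    rintro (((k | k) | k) | k) hk hne <;> simp [pt, level, ptA, ptB, ptC, ptQ] at hk hne ⊢
    · linarith [param_strictMono (lt_of_le_of_ne hk (Ne.symm hne))]
    all_goals linarith [param_lt_one j, lift_pos (σ k), hcast k]
  · refine ⟨LinearMap.snd ℝ ℝ ℝ, ?_⟩
    rintro (((k | k) | k) | k) hk hne <;> simp [pt, level, ptA, ptB, ptC, ptQ] at hk hne ⊢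
    · linarith [param_lt_one j, param_lt_one k, hcast k]
    · linarith [param_strictMono (lt_of_le_of_ne hk (Ne.symm hne))]
    all_goals linarith [param_lt_one j, param_pos k, lift_lt_one (σ k), hcast k]
  · refine ⟨LinearMap.fst ℝ ℝ ℝ, ?_⟩
    rintro (((k | k) | k) | k) hk hne <;> simp [pt, level] at hk hne ⊢
    · linarith [ptA_fst_neg k, lt_ptC_fst j, hcast k]
    · linarith [ptB_fst_lt_two k, lt_ptC_fst j, hcast k]
    · exact ptC_fst_strictMono (lt_of_le_of_ne hk hne)
    · linarith [ptQ_fst_lt σ k, lt_ptC_fst j, hcast k]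
  · refine ⟨LinearMap.fst ℝ ℝ ℝ + LinearMap.snd ℝ ℝ ℝ, ?_⟩
    rintro (((k | k) | k) | k) hk hne <;> simp [pt, level, ptA, ptB, ptC, ptQ] at hk hne ⊢
    · linarith [param_lt_one k, lift_pos (σ j), hcast k]
    · linarith [lift_pos (σ j)]
    · linarith [lift_pos (σ j)]
    · linarith [lift_strictAnti (lt_of_le_of_ne hk (σ.injective.ne hne).symm)]

lemma ptB_mem_segment {j k : Fin m} (h : j ≤ k) :
    ptB m k ∈ segment ℝ (ptB m j) (ptC m j.rev) :=
  mem_segment_of_mem_line (s := -1) (c := 0) (by simp [ptB]) (by simp [ptC]) (by simp [ptB])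
    (ptB_fst_strictMono.monotone h) (by linarith [ptB_fst_lt_two k, lt_ptC_fst j.rev])

lemma ptC_mem_segment {j k : Fin m} (h : k ≤ j.rev) :
    ptC m k ∈ segment ℝ (ptB m j) (ptC m j.rev) :=
  mem_segment_of_mem_line (s := -1) (c := 0) (by simp [ptB]) (by simp [ptC]) (by simp [ptC])
    (by linarith [ptB_fst_lt_two j, lt_ptC_fst k]) (ptC_fst_strictMono.monotone h)

lemma ptA_mem_convexHull {j k : Fin m} (h : j ≤ k) :
    ptA m k ∈ convexHull ℝ {ptA m j, ptB m j, ptC m j.rev} := by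
  have hm : (1 : ℝ) ≤ m := by exact_mod_cast j.pos
  -- `(4m + 2, -(4m + 2))` is where the line of the `ptA` points meets the line `x + y = 0`.
  refine mem_convexHull_of_mem_segment_of_mem_segment (mem_insert _ _)
    (mem_insert_of_mem _ (mem_insert _ _)) (mem_insert_of_mem _ (mem_insert_of_mem _ rfl))
    (z := ((4 * m + 2 : ℝ), -(4 * m + 2 : ℝ))) ?_ ?_
  · exact mem_segment_of_mem_line (s := -1) (c := 0) (by simp [ptB]) (by simp [ptC]) (by simp)
      (by linarith [ptB_fst_lt_two j]) (by linarith [lt_ptC_fst j.rev])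
  · exact mem_segment_of_mem_line (s := 1) (c := -(8 * m + 4)) (by simp [ptA]; ring)
      (by simp; ring) (by simp [ptA]; ring) (ptA_fst_strictMono.monotone h)
      (by linarith [ptA_fst_neg k])

lemma ptQ_mem_convexHull (σ : Equiv.Perm (Fin m)) {j k : Fin m} (h : j < σ k) :
    ptQ σ k ∈ convexHull ℝ {ptQ σ (σ.symm j), ptB m j, ptC m j.rev} := by
  set P := ptQ σ k
  set Q := ptQ σ (σ.symm j)
  set δ := lift m (σ k) / lift m j
  have hδ_pos : 0 < δ := div_pos (lift_pos _) (lift_pos _)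
  have hδ_le : δ ≤ ratio m := (div_le_iff₀ (lift_pos j)).2 (lift_le_ratio_mul h)
  have hδ_lt : δ < 1 := hδ_le.trans_lt ratio_lt_one
  have hP : P.1 + P.2 = 2 * lift m (σ k) := by simp only [P, ptQ]; ring
  have hQ : δ * (Q.1 + Q.2) = 2 * lift m (σ k) := by
    simp only [Q, ptQ, Equiv.apply_symm_apply, δ]; field_simp [(lift_pos j).ne']; ring
  have hm : (1 : ℝ) ≤ m := by exact_mod_cast j.pos
  have hδm : δ * (2 * m + 4) ≤ 1 := by nlinarith [ratio_mul (m := m)]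
  have hδQ : δ * Q.1 ≤ δ * (2 * m + 3) := by gcongr; exact (ptQ_fst_lt σ _).le
  have hδC : δ * (ptC m j.rev).1 ≤ δ * (8 * m + 4) := by gcongr; exact (ptC_fst_lt _).le
  -- `P = δ • Q + (1 - δ) • (x, -x)`: the line through `Q` and `P` meets `x + y = 0` at
  -- `(x, -x)`, which lies between `ptB m j` and `ptC m j.rev` since `δ ≤ ratio m` is small.
  set x := (P.1 - δ * Q.1) / (1 - δ)
  have hx : (1 - δ) * x = P.1 - δ * Q.1 := mul_div_cancel₀ _ (by linarith)
  refine mem_convexHull_of_mem_segment_of_mem_segment (mem_insert Q _)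
    (mem_insert_of_mem _ (mem_insert _ _)) (mem_insert_of_mem _ (mem_insert_of_mem _ rfl))
    (z := (x, -x)) ?_ ⟨δ, 1 - δ, hδ_pos.le, by linarith, by ring, ?_⟩
  · refine mem_segment_of_mem_line (s := -1) (c := 0) (by simp [ptB]) (by simp [ptC]) (by simp)
      (le_of_mul_le_mul_left ?_ (by linarith : 0 < 1 - δ))
      (le_of_mul_le_mul_left ?_ (by linarith : 0 < 1 - δ))
    · nlinarith [ptB_fst_pos j, ptB_fst_lt_two j, three_lt_ptQ_fst σ k]
    · nlinarith [ptQ_fst_lt σ k, three_lt_ptQ_fst σ (σ.symm j), lt_ptC_fst j.rev]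
  · ext <;> simp <;> linarith

theorem hullVertices_image_le_level (σ : Equiv.Perm (Fin m)) (j : Fin m) :
    hullVertices (pt σ '' {i | j ≤ level σ i}) = pt σ '' {i | level σ i = j} := by
  refine hullVertices_image_eq (pt_injective σ) (fun i hi => le_of_eq (Eq.symm hi)) ?_ ?_
  · rintro i rfl
    exact exists_forall_lt_of_level_le σ i
  · intro i hi hne
    have hlt : j < level σ i := lt_of_le_of_ne hi (Ne.symm hne)
    have hA : ptA m j ∈ pt σ '' {i | level σ i = j} := ⟨.inl (.inl (.inl j)), rfl, rfl⟩
    have hB : ptB m j ∈ pt σ '' {i | level σ i = j} := ⟨.inl (.inl (.inr j)), rfl, rfl⟩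
    have hC : ptC m j.rev ∈ pt σ '' {i | level σ i = j} :=
      ⟨.inl (.inr j.rev), Fin.rev_rev j, rfl⟩
    have hQ : ptQ σ (σ.symm j) ∈ pt σ '' {i | level σ i = j} :=
      ⟨.inr (σ.symm j), σ.apply_symm_apply j, rfl⟩
    rcases i with ((k | k) | k) | k
    · exact convexHull_mono (insert_subset hA (insert_subset hB (singleton_subset_iff.2 hC)))
        (ptA_mem_convexHull hlt.le)
    · exact segment_subset_convexHull hB hC (ptB_mem_segment hlt.le)
    · exact segment_subset_convexHull hB hC (ptC_mem_segment (Fin.le_rev_iff.2 hlt.le))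
    · exact convexHull_mono (insert_subset hQ (insert_subset hB (singleton_subset_iff.2 hC)))
        (ptQ_mem_convexHull σ hlt)

theorem isOnionDecomp_layers (hm : 0 < m) (σ : Equiv.Perm (Fin m)) :
    IsOnionDecomp (range (ptA m) ∪ range (ptB m) ∪ range (ptC m) ∪ range (ptQ σ))
      (layers σ) := by
  have := isOnionDecomp_ofFn hm (pt_injective σ) (fun j => ⟨.inl (.inl (.inl j)), rfl⟩)
    (hullVertices_image_le_level σ)
  rwa [pt, Sum.elim_range, Sum.elim_range, Sum.elim_range] at this

lemma pos_lt (i : PointIndex m) : pos i < 4 * m := by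
  rcases i with ((k | k) | k) | k <;> simp [pos] <;> omega

lemma pos_injective : Injective (pos (m := m)) := by
  rintro (((k | k) | k) | k) (((k' | k') | k') | k') h <;> simp [pos] at h ⊢ <;> omega

lemma exists_pos_eq {n : ℕ} (hn : n < 4 * m) : ∃ i : PointIndex m, pos i = n := by
  rcases lt_or_ge n m with h₁ | h₁
  · exact ⟨.inl (.inl (.inl ⟨n, h₁⟩)), rfl⟩
  rcases lt_or_ge n (2 * m) with h₂ | h₂
  · exact ⟨.inl (.inl (.inr ⟨n - m, by omega⟩)), by simp [pos]; omega⟩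
  rcases lt_or_ge n (3 * m) with h₃ | h₃
  · exact ⟨.inl (.inr ⟨n - 2 * m, by omega⟩), by simp [pos]; omega⟩
  · exact ⟨.inr ⟨n - 3 * m, by omega⟩, by simp [pos]; omega⟩

lemma familyFList_getD_pos (σ : Equiv.Perm (Fin m)) (i : PointIndex m) :
    (familyFList m (ptA m) (ptB m) (ptC m) (ptQ σ)).getD (pos i) (0, 0) = pt σ i := by
  rcases i with ((k | k) | k) | k <;>
    simp [familyFList, pos, pt, List.getD_eq_getElem?_getD, List.getElem?_append, two_mul,
      show 3 * m = m + (m + m) by ring, add_assoc]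

theorem indexForm_layers (σ : Equiv.Perm (Fin m)) :
    indexForm m (ptA m) (ptB m) (ptC m) (ptQ σ) (layers σ)
      = List.ofFn fun j => pos '' {i | level σ i = j} := by
  rw [indexForm, layers, List.map_ofFn]
  congr 1
  funext j
  exact setOf_getD_mem_image_eq (pt_injective σ) pos_lt (fun _ => exists_pos_eq)
    (familyFList_getD_pos σ) _

theorem indexForm_layers_injective :
    Injective fun σ : Equiv.Perm (Fin m) =>
      indexForm m (ptA m) (ptB m) (ptC m) (ptQ σ) (layers σ) := by
  intro σ τ h
  simp only [indexForm_layers, List.ofFn_inj] at h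
  refine Equiv.ext fun k => ?_
  have hk : Sum.inr k ∈ {i | level τ i = σ k} :=
    pos_injective.image_injective (congrFun h (σ k)) ▸ rfl
  exact hk.symm

end FamilyF

/-- At least `(n/4)!` distinct index-form combinatorial onion layer decompositions arise
from members of the family `F_n`. -/
theorem familyF_many_onion_decompositions
    (n m : ℕ) (hm : 0 < m) (hn : n = 4 * m) :
    ∃ T : Finset (List (Set ℕ)),
      Nat.factorial m ≤ T.card ∧
      ∀ IL ∈ T, ∃ (p1 p2 p3 q : Fin m → ℝ × ℝ) (L : List (Set (ℝ × ℝ))),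
        InFamilyF n m p1 p2 p3 q ∧
        IsOnionDecomp (Set.range p1 ∪ Set.range p2 ∪ Set.range p3 ∪ Set.range q) L ∧
        IL = indexForm m p1 p2 p3 q L := by
  classical
  refine ⟨Finset.univ.image fun σ : Equiv.Perm (Fin m) =>
    indexForm m (FamilyF.ptA m) (FamilyF.ptB m) (FamilyF.ptC m) (FamilyF.ptQ σ)
      (FamilyF.layers σ), ?_, ?_⟩
  · rw [Finset.card_image_of_injective _ FamilyF.indexForm_layers_injective, Finset.card_univ,
      Fintype.card_perm, Fintype.card_fin]
  · simp only [Finset.mem_image, Finset.mem_univ, true_and]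
    rintro _ ⟨σ, rfl⟩
    exact ⟨_, _, _, _, _, FamilyF.inFamilyF hn σ, FamilyF.isOnionDecomp_layers hm σ, rfl⟩
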